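/- Let X and Y be ℝ^d-valued random variables with finite first moments, and let ε > 0. Let T_ε be a finite subset of the unit sphere S^{d-1} such that every unit vector is within Euclidean distance ε of some element of T_ε. Then the max-sliced Wasserstein distance W₁*(X,Y) = sup over unit vectors t of W₁(t·X, t·Y) satisfies |W₁*(X,Y) − max over t ∈ T_ε of W₁(t·X, t·Y)| ≤ ε·(E‖X‖ + E‖Y‖). -/

import Mathlib

/-!
Coupling `s·Z` with `t·Z` through the common sample `ω` shows `W₁(s·Z, t·Z) ≤ ‖s - t‖ E‖Z‖`,
so by the triangle inequality for `W₁` (which rests on the gluing lemma for couplings) the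
function `t ↦ W₁(t·X, t·Y)` is `(E‖X‖ + E‖Y‖)`-Lipschitz. Its supremum over the sphere therefore
exceeds its maximum over an `ε`-net by at most `ε (E‖X‖ + E‖Y‖)`; the supremum is finite because
`W₁(t·X, t·Y) ≤ E‖X - Y‖` for unit `t`.
-/

open MeasureTheory ENNReal ProbabilityTheory
open scoped RealInnerProductSpace

noncomputable def W1 {B : Type*} [NormedAddCommGroup B] [MeasurableSpace B]
    (μ ν : Measure B) : ℝ≥0∞ :=
  ⨅ (π : Measure (B × B)) (_ : π.map Prod.fst = μ) (_ : π.map Prod.snd = ν),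
    ∫⁻ p, ‖p.1 - p.2‖₊ ∂π

lemma W1_le_lintegral {B : Type*} [NormedAddCommGroup B] [MeasurableSpace B] {μ ν : Measure B}
    (π : Measure (B × B)) (h₁ : π.map Prod.fst = μ) (h₂ : π.map Prod.snd = ν) :
    W1 μ ν ≤ ∫⁻ p, ‖p.1 - p.2‖ₑ ∂π :=
  iInf_le_of_le π (iInf_le_of_le h₁ (iInf_le _ h₂))

lemma W1_map_le_lintegral {Ω B : Type*} [MeasurableSpace Ω] [NormedAddCommGroup B]
    [MeasurableSpace B] [MeasurableSub₂ B] [OpensMeasurableSpace B] (P : Measure Ω) {f g : Ω → B}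
    (hf : AEMeasurable f P) (hg : AEMeasurable g P) :
    W1 (P.map f) (P.map g) ≤ ∫⁻ ω, ‖f ω - g ω‖ₑ ∂P := by
  have hfg : AEMeasurable (fun ω => (f ω, g ω)) P := hf.prodMk hg
  exact (W1_le_lintegral _ (AEMeasurable.map_map_of_aemeasurable measurable_fst.aemeasurable hfg)
    (AEMeasurable.map_map_of_aemeasurable measurable_snd.aemeasurable hfg)).trans_eq
    (lintegral_map' (measurable_fst.sub measurable_snd).enorm.aemeasurable hfg)

namespace MeasureTheory.Measure

variable {α β γ : Type*} [MeasurableSpace α] [MeasurableSpace β] [MeasurableSpace γ]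
  [StandardBorelSpace β] [Nonempty β] [StandardBorelSpace γ] [Nonempty γ]

lemma exists_gluing (π₁ : Measure (α × β)) (π₂ : Measure (β × γ)) [IsFiniteMeasure π₁]
    [IsFiniteMeasure π₂] (h : π₁.snd = π₂.fst) :
    ∃ ρ : Measure (α × β × γ), ρ.map (fun p => (p.1, p.2.1)) = π₁ ∧ ρ.snd = π₂ := by
  -- draw `x` from `π₁.fst`, then `y` given `x` under `π₁`, then `z` given `y` under `π₂`
  refine ⟨π₁.fst ⊗ₘ (π₁.condKernel ⊗ₖ π₂.condKernel.prodMkLeft α), ?_, ?_⟩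
  · rw [show (fun p : α × β × γ => (p.1, p.2.1)) = Prod.map id Prod.fst from rfl,
      ← compProd_map measurable_fst, ← Kernel.fst_eq, Kernel.fst_compProd, disintegrate]
  · rw [snd_compProd, Kernel.compProd_prodMkLeft_eq_comp, ← comp_assoc, ← snd_compProd π₁.fst,
      disintegrate, h, ← compProd_eq_comp_prod, disintegrate]

end MeasureTheory.Measure

lemma W1_triangle {B : Type*} [NormedAddCommGroup B] [MeasurableSpace B] [BorelSpace B]
    [PolishSpace B] (μ ν ξ : Measure B) [IsFiniteMeasure μ] [IsFiniteMeasure ν] :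
    W1 μ ξ ≤ W1 μ ν + W1 ν ξ := by
  suffices h : ∀ π₁ : Measure (B × B), π₁.map Prod.fst = μ → π₁.map Prod.snd = ν →
      ∀ π₂ : Measure (B × B), π₂.map Prod.fst = ν → π₂.map Prod.snd = ξ →
      W1 μ ξ ≤ (∫⁻ p, ‖p.1 - p.2‖ₑ ∂π₁) + ∫⁻ p, ‖p.1 - p.2‖ₑ ∂π₂ by
    simp only [W1, ENNReal.iInf_add, ENNReal.add_iInf]
    exact le_iInf fun π₂ => le_iInf₂ fun h₃ h₄ => le_iInf fun π₁ => le_iInf₂ fun h₁ h₂ =>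
      h π₁ h₁ h₂ π₂ h₃ h₄
  intro π₁ h₁ h₂ π₂ h₃ h₄
  have : IsFiniteMeasure π₁ :=
    ⟨by rw [← Measure.fst_univ, Measure.fst, h₁]; exact measure_lt_top _ _⟩
  have : IsFiniteMeasure π₂ :=
    ⟨by rw [← Measure.fst_univ, Measure.fst, h₃]; exact measure_lt_top _ _⟩
  obtain ⟨ρ, hρ₁, hρ₂⟩ := Measure.exists_gluing π₁ π₂ (h₂.trans h₃.symm)
  have hm : Measurable (fun p : B × B × B => (p.1, p.2.2)) := by fun_prop
  calc W1 μ ξ ≤ ∫⁻ p, ‖p.1 - p.2.2‖ₑ ∂ρ := by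
        refine (W1_le_lintegral (ρ.map fun p => (p.1, p.2.2)) ?_ ?_).trans_eq
          (lintegral_map (by fun_prop) hm)
        · rw [Measure.map_map measurable_fst hm, ← h₁, ← hρ₁,
            Measure.map_map measurable_fst (by fun_prop)]
          rfl
        · rw [Measure.map_map measurable_snd hm, ← h₄, ← hρ₂, Measure.snd,
            Measure.map_map measurable_snd measurable_snd]
          rfl
    _ ≤ ∫⁻ p, ‖p.1 - p.2.1‖ₑ + ‖p.2.1 - p.2.2‖ₑ ∂ρ := lintegral_mono fun p => by
        simpa only [edist_eq_enorm_sub] using edist_triangle p.1 p.2.1 p.2.2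
    _ = (∫⁻ p, ‖p.1 - p.2.1‖ₑ ∂ρ) + ∫⁻ p, ‖p.2.1 - p.2.2‖ₑ ∂ρ :=
        lintegral_add_left (by fun_prop) _
    _ = (∫⁻ p, ‖p.1 - p.2‖ₑ ∂π₁) + ∫⁻ p, ‖p.1 - p.2‖ₑ ∂π₂ := by
        rw [← hρ₁, ← hρ₂, Measure.snd, lintegral_map (by fun_prop) (by fun_prop),
          lintegral_map (by fun_prop) measurable_snd]

lemma enorm_inner_le {𝕜 E : Type*} [RCLike 𝕜] [SeminormedAddCommGroup E] [InnerProductSpace 𝕜 E]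
    (x y : E) : ‖(inner 𝕜 x y : 𝕜)‖ₑ ≤ ‖x‖ₑ * ‖y‖ₑ := by
  simpa only [enorm_eq_nnnorm, ← ENNReal.coe_mul, ENNReal.coe_le_coe] using
    nnnorm_inner_le_nnnorm x y

section Sliced

variable {Ω E : Type*} [MeasurableSpace Ω] [NormedAddCommGroup E] [InnerProductSpace ℝ E]
  [MeasurableSpace E] [OpensMeasurableSpace E] {P : Measure Ω}

lemma W1_map_inner_le_enorm_sub_mul {Z : Ω → E} (hZ : AEMeasurable Z P) (s t : E) :
    W1 (P.map fun ω => ⟪s, Z ω⟫) (P.map fun ω => ⟪t, Z ω⟫) ≤ ‖s - t‖ₑ * ∫⁻ ω, ‖Z ω‖ₑ ∂P := by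
  have h_proj (u : E) : AEMeasurable (fun ω => ⟪u, Z ω⟫) P :=
    (continuous_const.inner continuous_id).measurable.comp_aemeasurable hZ
  refine (W1_map_le_lintegral P (h_proj s) (h_proj t)).trans ?_
  rw [← lintegral_const_mul' _ _ enorm_ne_top]
  refine lintegral_mono fun ω => ?_
  rw [← inner_sub_left]
  exact enorm_inner_le _ _

lemma W1_map_inner_le_enorm_mul {X Y : Ω → E} (hX : AEMeasurable X P) (hY : AEMeasurable Y P)
    (t : E) :
    W1 (P.map fun ω => ⟪t, X ω⟫) (P.map fun ω => ⟪t, Y ω⟫) ≤ ‖t‖ₑ * ∫⁻ ω, ‖X ω - Y ω‖ₑ ∂P := by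
  have h_proj {Z : Ω → E} (hZ : AEMeasurable Z P) : AEMeasurable (fun ω => ⟪t, Z ω⟫) P :=
    (continuous_const.inner continuous_id).measurable.comp_aemeasurable hZ
  refine (W1_map_le_lintegral P (h_proj hX) (h_proj hY)).trans ?_
  rw [← lintegral_const_mul' _ _ enorm_ne_top]
  refine lintegral_mono fun ω => ?_
  rw [← inner_sub_right]
  exact enorm_inner_le _ _

lemma W1_map_inner_le_add [IsFiniteMeasure P] {X Y : Ω → E} (hX : AEMeasurable X P)
    (hY : AEMeasurable Y P) (s t : E) :
    W1 (P.map fun ω => ⟪s, X ω⟫) (P.map fun ω => ⟪s, Y ω⟫) ≤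
      W1 (P.map fun ω => ⟪t, X ω⟫) (P.map fun ω => ⟪t, Y ω⟫) +
        ‖s - t‖ₑ * ((∫⁻ ω, ‖X ω‖ₑ ∂P) + ∫⁻ ω, ‖Y ω‖ₑ ∂P) :=
  calc W1 (P.map fun ω => ⟪s, X ω⟫) (P.map fun ω => ⟪s, Y ω⟫)
      ≤ W1 (P.map fun ω => ⟪s, X ω⟫) (P.map fun ω => ⟪t, X ω⟫) +
          (W1 (P.map fun ω => ⟪t, X ω⟫) (P.map fun ω => ⟪t, Y ω⟫) +
            W1 (P.map fun ω => ⟪t, Y ω⟫) (P.map fun ω => ⟪s, Y ω⟫)) :=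
        (W1_triangle _ _ _).trans (add_le_add_right (W1_triangle _ _ _) _)
    _ ≤ ‖s - t‖ₑ * (∫⁻ ω, ‖X ω‖ₑ ∂P) +
          (W1 (P.map fun ω => ⟪t, X ω⟫) (P.map fun ω => ⟪t, Y ω⟫) +
            ‖t - s‖ₑ * ∫⁻ ω, ‖Y ω‖ₑ ∂P) := by
        gcongr
        · exact W1_map_inner_le_enorm_sub_mul hX s t
        · exact W1_map_inner_le_enorm_sub_mul hY t s
    _ = _ := by rw [enorm_sub_rev t s]; ring

end Sliced

lemma ENNReal.abs_toReal_sub_le_of_le_add {a b c : ℝ≥0∞} (hba : b ≤ a) (hab : a ≤ b + c)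
    (ha : a ≠ ∞) (hc : c ≠ ∞) : |a.toReal - b.toReal| ≤ c.toReal := by
  have hb : b ≠ ∞ := ne_top_of_le_ne_top ha hba
  rw [abs_of_nonneg (sub_nonneg.2 (ENNReal.toReal_mono ha hba)), sub_le_iff_le_add',
    ← ENNReal.toReal_add hb hc]
  exact ENNReal.toReal_mono (ENNReal.add_ne_top.2 ⟨hb, hc⟩) hab

/-- The max-sliced 1-Wasserstein distance is approximated within
`ε (E‖X‖ + E‖Y‖)` by the maximum over a finite ε-net of the unit sphere. -/
theorem max_sliced_W1_net_approx {d : ℕ}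
    {Ω : Type*} [MeasurableSpace Ω] (P : Measure Ω) [IsProbabilityMeasure P]
    (X Y : Ω → EuclideanSpace ℝ (Fin d))
    (hXm : AEMeasurable X P) (hYm : AEMeasurable Y P)
    (hX : Integrable (fun ω => ‖X ω‖) P) (hY : Integrable (fun ω => ‖Y ω‖) P)
    (ε : ℝ) (hε : 0 < ε)
    (Tε : Finset (EuclideanSpace ℝ (Fin d)))
    (hTsphere : ∀ t ∈ Tε, ‖t‖ = 1)
    (hTnet : ∀ s : EuclideanSpace ℝ (Fin d), ‖s‖ = 1 → ∃ t ∈ Tε, ‖s - t‖ ≤ ε) :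
    |(⨆ t : {t : EuclideanSpace ℝ (Fin d) // ‖t‖ = 1},
        W1 (P.map fun ω => ⟪(t : EuclideanSpace ℝ (Fin d)), X ω⟫)
           (P.map fun ω => ⟪(t : EuclideanSpace ℝ (Fin d)), Y ω⟫)).toReal -
      (⨆ t ∈ Tε, W1 (P.map fun ω => ⟪t, X ω⟫) (P.map fun ω => ⟪t, Y ω⟫)).toReal| ≤
    ε * ((∫ ω, ‖X ω‖ ∂P) + ∫ ω, ‖Y ω‖ ∂P) := by
  have hXi : Integrable X P := (integrable_norm_iff hXm.aestronglyMeasurable).1 hX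
  have hYi : Integrable Y P := (integrable_norm_iff hYm.aestronglyMeasurable).1 hY
  set S := ⨆ t : {t : EuclideanSpace ℝ (Fin d) // ‖t‖ = 1},
    W1 (P.map fun ω => ⟪(t : EuclideanSpace ℝ (Fin d)), X ω⟫)
      (P.map fun ω => ⟪(t : EuclideanSpace ℝ (Fin d)), Y ω⟫)
  set M := ⨆ t ∈ Tε, W1 (P.map fun ω => ⟪t, X ω⟫) (P.map fun ω => ⟪t, Y ω⟫)
  set C := (∫⁻ ω, ‖X ω‖ₑ ∂P) + ∫⁻ ω, ‖Y ω‖ₑ ∂P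
  have hC : C ≠ ∞ := ENNReal.add_ne_top.2 ⟨hXi.2.ne, hYi.2.ne⟩
  have hMS : M ≤ S := iSup₂_le fun t ht =>
    le_iSup_of_le (⟨t, hTsphere t ht⟩ : {t : EuclideanSpace ℝ (Fin d) // ‖t‖ = 1}) le_rfl
  have hSM : S ≤ M + ENNReal.ofReal ε * C := iSup_le fun s => by
    obtain ⟨t, ht, hst⟩ := hTnet s s.2
    refine (W1_map_inner_le_add hXm hYm s t).trans (add_le_add (le_iSup₂_of_le t ht le_rfl) ?_)
    rw [← ofReal_norm]
    gcongr
  have hS : S ≠ ∞ := by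
    refine ne_top_of_le_ne_top (hXi.sub hYi).2.ne (iSup_le fun s => ?_)
    have h := W1_map_inner_le_enorm_mul hXm hYm (s : EuclideanSpace ℝ (Fin d))
    rwa [← ofReal_norm, s.2, ofReal_one, one_mul] at h
  have h_err : (ENNReal.ofReal ε * C).toReal = ε * ((∫ ω, ‖X ω‖ ∂P) + ∫ ω, ‖Y ω‖ ∂P) := by
    rw [ENNReal.toReal_mul, ENNReal.toReal_ofReal hε.le, ENNReal.toReal_add hXi.2.ne hYi.2.ne,
      integral_norm_eq_lintegral_enorm hXm.aestronglyMeasurable,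
      integral_norm_eq_lintegral_enorm hYm.aestronglyMeasurable]
  rw [← h_err]
  exact ENNReal.abs_toReal_sub_le_of_le_add hMS hSM hS (ENNReal.mul_ne_top ofReal_ne_top hC)
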